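/- For every finite graph G, ζ_1(G) ≤ Δ(G)·prox_1(G). -/
import Mathlib


open scoped Classical
open Finset

variable {V : Type*}

/-- External vertex boundary: vertices outside `S` adjacent to some vertex of `S`. -/
noncomputable def vBoundary [Fintype V] (G : SimpleGraph V) (S : Finset V) : Finset V :=
  Finset.univ.filter fun v => v ∉ S ∧ ∃ u ∈ S, G.Adj u v

/-- Vertex isoperimetric number `Φ_V(G,k)`. -/
noncomputable def PhiV [Fintype V] (G : SimpleGraph V) (k : ℕ) : ℕ :=
  sInf {m | ∃ S : Finset V, S.card = k ∧ (vBoundary G S).card = m}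

/-- Number of edges with exactly one endpoint in `S`. -/
noncomputable def edgeBoundaryCard [Fintype V] (G : SimpleGraph V) (S : Finset V) : ℕ :=
  (Finset.univ.filter fun p : V × V => p.1 ∈ S ∧ p.2 ∉ S ∧ G.Adj p.1 p.2).card

/-- Edge isoperimetric number `Φ_E(G,k)`. -/
noncomputable def PhiE [Fintype V] (G : SimpleGraph V) (k : ℕ) : ℕ :=
  sInf {m | ∃ S : Finset V, S.card = k ∧ edgeBoundaryCard G S = m}

/-- Vertex isoperimetric peak `Φ_V(G)`. -/
noncomputable def PhiVPeak [Fintype V] (G : SimpleGraph V) : ℕ :=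
  (Finset.Icc 1 (Fintype.card V)).sup (PhiV G)

/-- Edge isoperimetric peak `Φ_E(G)`. -/
noncomputable def PhiEPeak [Fintype V] (G : SimpleGraph V) : ℕ :=
  (Finset.Icc 1 (Fintype.card V)).sup (PhiE G)

/-- The h-index of a function `f : ℕ → ℕ`: the largest `h` such that `f k ≥ h`
for `h` consecutive values `k1 ≤ k ≤ k1 + h - 1`. -/
noncomputable def hIndex (f : ℕ → ℕ) : ℕ :=
  sSup {h : ℕ | ∃ k1 : ℕ, ∀ k, k1 ≤ k → k < k1 + h → h ≤ f k}
/-- Closed neighborhood of `v` as a finset. -/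
noncomputable def closedNbr [Fintype V] (G : SimpleGraph V) (v : V) : Finset V :=
  insert v (Finset.univ.filter (G.Adj v))

/-- A robber walk: at each time step the robber stays put or moves to a neighbor. -/
def IsRWalk [Fintype V] (G : SimpleGraph V) (w : ℕ → V) : Prop :=
  ∀ t, w (t + 1) ∈ closedNbr G (w t)

/-- The history of answer vectors produced when the cops use strategy `σ`
(with `k` cops and answer function `A`) against the robber walk `w`:
`hist A σ w t` is the list of the first `t` answer vectors. In round `t` the
cops probe `σ` applied to the history so far, and each probe at `u` returns
`A u r` where `r` is the robber's current position. -/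
noncomputable def hist [Fintype V] {α : Type*} (A : V → V → α) {k : ℕ}
    (σ : List (Fin k → α) → (Fin k → V)) (w : ℕ → V) : ℕ → List (Fin k → α)
  | 0 => []
  | t + 1 => hist A σ w t ++ [fun i => A (σ (hist A σ w t) i) (w t)]

/-- The cop strategy `σ` wins the localization-type game with answer function `A`:
against every robber walk, at some round the answer history uniquely determines
the robber's current vertex. -/
def WinsLoc [Fintype V] {α : Type*} (G : SimpleGraph V) (A : V → V → α) (k : ℕ)
    (σ : List (Fin k → α) → (Fin k → V)) : Prop :=
  ∀ w, IsRWalk G w → ∃ t, ∀ w', IsRWalk G w' →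
    hist A σ w' (t + 1) = hist A σ w (t + 1) → w' t = w t

/-- The least number of cops winning the localization-type game with answer
function `A`. -/
noncomputable def locNum [Fintype V] {α : Type*} (G : SimpleGraph V)
    (A : V → V → α) : ℕ :=
  sInf {k | ∃ σ : List (Fin k → α) → (Fin k → V), WinsLoc G A k σ}

/-- One-visibility answer: `0` if the probe is on the robber, `1` if adjacent,
and no information (`none`, i.e. `∗`) otherwise. -/
noncomputable def ans1 [Fintype V] (G : SimpleGraph V) (u r : V) : Option ℕ :=
  if u = r then some 0 else if G.Adj u r then some 1 else none

/-- The one-visibility localization number `ζ₁(G)`. -/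
noncomputable def zeta1 [Fintype V] (G : SimpleGraph V) : ℕ :=
  locNum G (ans1 G)

/-- The localization number `ζ(G)`: probes return exact distances. -/
noncomputable def zeta [Fintype V] (G : SimpleGraph V) : ℕ :=
  locNum G G.dist

/-- The cop strategy `σ` wins the one-proximity game: against every robber walk
some probe eventually returns a distance other than `∗`. -/
def WinsProx [Fintype V] (G : SimpleGraph V) (k : ℕ)
    (σ : List (Fin k → Option ℕ) → (Fin k → V)) : Prop :=
  ∀ w, IsRWalk G w → ∃ t i, ans1 G (σ (hist (ans1 G) σ w t) i) (w t) ≠ none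

/-- The one-proximity number `prox₁(G)`. -/
noncomputable def proxNum [Fintype V] (G : SimpleGraph V) : ℕ :=
  sInf {k | ∃ σ : List (Fin k → Option ℕ) → (Fin k → V), WinsProx G k σ}

/-! ### Auxiliary material for the proof -/

section Aux

variable [Fintype V]

lemma ans1_eq_zero_iff (G : SimpleGraph V) (u r : V) :
    ans1 G u r = some 0 ↔ u = r := by
  unfold ans1
  by_cases h1 : u = r
  · simp [h1]
  · by_cases h2 : G.Adj u r <;> simp [h1, h2]

lemma ans1_of_adj (G : SimpleGraph V) {u r : V} (h : G.Adj u r) :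
    ans1 G u r = some 1 := by
  unfold ans1
  rw [if_neg (G.ne_of_adj h), if_pos h]

lemma adj_of_ans1_ne (G : SimpleGraph V) {u r : V} (hne : u ≠ r)
    (h : ans1 G u r ≠ none) : G.Adj u r := by
  unfold ans1 at h
  rw [if_neg hne] at h
  by_contra hadj
  rw [if_neg hadj] at h
  exact h rfl

lemma hist_length {α : Type*} (G : SimpleGraph V) (A : V → V → α) {k : ℕ}
    (σ : List (Fin k → α) → (Fin k → V)) (w : ℕ → V) (t : ℕ) :
    (hist A σ w t).length = t := by
  induction t with
  | zero => rfl
  | succ t ih => simp [hist, ih]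

lemma hist_succ_inj {α : Type*} (G : SimpleGraph V) (A : V → V → α) {k : ℕ}
    (σ : List (Fin k → α) → (Fin k → V)) (w w' : ℕ → V) (t : ℕ)
    (h : hist A σ w' (t + 1) = hist A σ w (t + 1)) :
    hist A σ w' t = hist A σ w t ∧
      (fun i => A (σ (hist A σ w' t) i) (w' t)) =
        (fun i => A (σ (hist A σ w t) i) (w t)) := by
  have hlen : (hist A σ w' t).length = (hist A σ w t).length := by
    rw [hist_length G, hist_length G]
  have := List.append_inj h hlen
  refine ⟨this.1, ?_⟩
  have := this.2
  simpa using this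

/-- Neighbors of `u` as a list. -/
noncomputable def nbrList (G : SimpleGraph V) (u : V) : List V :=
  (G.neighborFinset u).toList

/-- Position of the `j`-th probe in the group simulating a proximity probe
at `u`: the probe itself for `j = 0`, and neighbors of `u` otherwise. -/
noncomputable def probePos (G : SimpleGraph V) (u : V) (j : ℕ) : V :=
  if j = 0 then u else (nbrList G u).getD (j - 1) u

/-- Projection of an answer vector for `d*k` cops to one for `k` cops,
taking the answer of the base probe of each group. -/
noncomputable def projAns {k d : ℕ} (hd : 0 < d) (f : Fin (d * k) → Option ℕ) :
    Fin k → Option ℕ :=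
  fun i => f (finProdFinEquiv (⟨0, hd⟩, i))

/-- The simulating strategy: each proximity probe is replaced by a group of
`d` probes at the probe vertex and its neighbors. -/
noncomputable def simStrat (G : SimpleGraph V) {k d : ℕ} (hd : 0 < d)
    (σ : List (Fin k → Option ℕ) → (Fin k → V))
    (L : List (Fin (d * k) → Option ℕ)) (x : Fin (d * k)) : V :=
  probePos G (σ (L.map (projAns hd)) (finProdFinEquiv.symm x).2)
    ((finProdFinEquiv.symm x).1 : Fin d).val

lemma simStrat_apply (G : SimpleGraph V) {k d : ℕ} (hd : 0 < d)
    (σ : List (Fin k → Option ℕ) → (Fin k → V))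
    (L : List (Fin (d * k) → Option ℕ)) (j : Fin d) (i : Fin k) :
    simStrat G hd σ L (finProdFinEquiv (j, i)) =
      probePos G (σ (L.map (projAns hd)) i) j.val := by
  unfold simStrat
  rw [Equiv.symm_apply_apply]

lemma hist_map (G : SimpleGraph V) {k d : ℕ} (hd : 0 < d)
    (σ : List (Fin k → Option ℕ) → (Fin k → V)) (w : ℕ → V) (t : ℕ) :
    (hist (ans1 G) (simStrat G hd σ) w t).map (projAns hd) =
      hist (ans1 G) σ w t := by
  induction t with
  | zero => rfl
  | succ t ih =>
    show (hist (ans1 G) (simStrat G hd σ) w t ++ _).map (projAns hd) = _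
    rw [List.map_append]
    show _ = hist (ans1 G) σ w t ++ _
    rw [ih]
    congr 1
    simp only [List.map_cons, List.map_nil]
    congr 1
    funext i
    show ans1 G (simStrat G hd σ (hist (ans1 G) (simStrat G hd σ) w t)
      (finProdFinEquiv (⟨0, hd⟩, i))) (w t) = _
    rw [simStrat_apply, ih]
    rfl

end Aux

/-- `ζ₁(G) ≤ Δ(G)·prox₁(G)`. -/
theorem zeta1_le_maxDegree_mul_prox [Fintype V] (G : SimpleGraph V)
    (hG : G.Connected) (hΔ : 1 ≤ G.maxDegree) :
    zeta1 G ≤ G.maxDegree * proxNum G := by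
  classical
  set Δ := G.maxDegree with hΔdef
  have hd : 0 < Δ := hΔ
  -- the proximity game is winnable (probe every vertex)
  have hVne : Nonempty V := hG.nonempty
  have hne : {k | ∃ σ : List (Fin k → Option ℕ) → (Fin k → V),
      WinsProx G k σ}.Nonempty := by
    refine ⟨Fintype.card V, fun _ => (Fintype.equivFin V).symm, ?_⟩
    intro w _
    refine ⟨0, Fintype.equivFin V (w 0), ?_⟩
    simp [ans1]
  set k := proxNum G with hkdef
  have hmem : k ∈ {k | ∃ σ : List (Fin k → Option ℕ) → (Fin k → V),
      WinsProx G k σ} := Nat.sInf_mem hne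
  obtain ⟨σ', hσ'⟩ := hmem
  -- the simulating strategy wins the one-visibility localization game
  have hwin : WinsLoc G (ans1 G) (Δ * k) (simStrat G hd σ') := by
    intro w hw
    obtain ⟨t, i, hprobe⟩ := hσ' w hw
    refine ⟨t, ?_⟩
    intro w' hw' hh
    set τ := simStrat G hd σ' with hτdef
    obtain ⟨Ht, Hf⟩ := hist_succ_inj G (ans1 G) τ w w' t hh
    rw [Ht] at Hf
    -- positions of the group of probes simulating the probe at `u`
    set u := σ' (hist (ans1 G) σ' w t) i with hudef
    have hpos : ∀ j : Fin Δ, τ (hist (ans1 G) τ w t) (finProdFinEquiv (j, i))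
        = probePos G u j.val := by
      intro j
      rw [hτdef, simStrat_apply, hist_map]
    have key : ∀ j : Fin Δ,
        ans1 G (probePos G u j.val) (w' t) = ans1 G (probePos G u j.val) (w t) := by
      intro j
      have := congrFun Hf (finProdFinEquiv (j, i))
      rwa [hpos j] at this
    have key0 : ans1 G u (w' t) = ans1 G u (w t) := by
      have := key ⟨0, hd⟩
      simpa [probePos] using this
    -- the probe at `u` got a non-`∗` answer against `w`
    have hprobe' : ans1 G u (w t) ≠ none := hprobe
    by_cases hzero : u = w t
    · -- answer `0`: robber is at `u`
      have : ans1 G u (w' t) = some 0 := by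
        rw [key0, (ans1_eq_zero_iff G u (w t)).2 hzero]
      exact ((ans1_eq_zero_iff G u (w' t)).1 this).symm.trans hzero
    · -- answer `1`: robber is a neighbor of `u`
      have hadj : G.Adj u (w t) := adj_of_ans1_ne G hzero hprobe'
      have hadj' : G.Adj u (w' t) := by
        by_cases hz' : u = w' t
        · exfalso
          have : ans1 G u (w t) = some 0 := by
            rw [← key0, (ans1_eq_zero_iff G u (w' t)).2 hz']
          exact hzero ((ans1_eq_zero_iff G u (w t)).1 this)
        · refine adj_of_ans1_ne G hz' ?_
          rw [key0, ans1_of_adj G hadj]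
          simp
      -- indices of the robber positions in the neighbor list of `u`
      have hlen : (nbrList G u).length ≤ Δ := by
        rw [nbrList, Finset.length_toList]
        exact G.degree_le_maxDegree u
      have hmemN : w t ∈ nbrList G u := by
        rw [nbrList, Finset.mem_toList, SimpleGraph.mem_neighborFinset]
        exact hadj
      have hmemN' : w' t ∈ nbrList G u := by
        rw [nbrList, Finset.mem_toList, SimpleGraph.mem_neighborFinset]
        exact hadj'
      obtain ⟨a, ha, hga⟩ := List.getElem_of_mem hmemN
      obtain ⟨b, hb, hgb⟩ := List.getElem_of_mem hmemN'
      -- neighbors with index `< Δ - 1` are probed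
      have hprobed : ∀ m (hm : m < (nbrList G u).length), m < Δ - 1 →
          ∃ j : Fin Δ, probePos G u j.val = (nbrList G u)[m] := by
        intro m hm hmΔ
        refine ⟨⟨m + 1, by omega⟩, ?_⟩
        show probePos G u (m + 1) = _
        rw [probePos, if_neg (Nat.succ_ne_zero m)]
        simp only [Nat.add_sub_cancel]
        exact List.getD_eq_getElem _ _ hm
      by_cases hma : a < Δ - 1
      · -- `w t` is probed; a `0` answer identifies the robber
        obtain ⟨j, hj⟩ := hprobed a ha hma
        have := key j
        rw [hj, hga] at this
        rw [(ans1_eq_zero_iff G (w t) (w t)).2 rfl] at this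
        exact ((ans1_eq_zero_iff G (w t) (w' t)).1 this).symm
      · by_cases hmb : b < Δ - 1
        · -- `w' t` is probed
          obtain ⟨j, hj⟩ := hprobed b hb hmb
          have := key j
          rw [hj, hgb] at this
          rw [(ans1_eq_zero_iff G (w' t) (w' t)).2 rfl] at this
          exact (ans1_eq_zero_iff G (w' t) (w t)).1 this.symm
        · -- both unprobed: they occupy the unique remaining index
          have hab : a = b := by omega
          subst hab
          exact hgb.symm.trans hga
      -- end case analysis
  calc zeta1 G ≤ Δ * k := Nat.sInf_le ⟨simStrat G hd σ', hwin⟩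
    _ = G.maxDegree * proxNum G := by rw [hΔdef, hkdef]
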